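/- The element y_{n−1}^{−1} x_{n−1} y_{n−1} (product taken in Homeo(C_n) with the convention fg = g∘f) belongs to G_0(n), while the element y_{n−1} x_{n−1} y_{n−1}^{−1} does not belong to yG(n). -/

import Mathlib

/-!
Write `ℓ = n - 1`, `y_w` for the copy of `y` acting after the prefix `w`, and compose maps with
`f * g = f ∘ g`. Cutting `y` along its first two letters gives `y * y_ℓ⁻¹ = y_{ℓ0}⁻¹ * y_0 * x_0`.
Localized at `ℓ` this reads `E₁ = y_ℓ * y_{ℓℓ}⁻¹ = y_{ℓℓ0}⁻¹ * y_{ℓ0} * x_{n-1}`, which lies in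
`G_0(n)` because `y_{ℓℓ0} = x_0 * y_{ℓ0} * x_0⁻¹`; conjugating by `x_0` gives
`E₂ = y_{ℓℓ} * y_{ℓℓℓ}⁻¹ ∈ G_0(n)`. As `x_{n-1}` conjugates `y_{ℓℓ}` to `y_{ℓℓℓ}`,
`y_ℓ * x_{n-1} * y_ℓ⁻¹ = E₁ * E₂ * x_{n-1} * E₁⁻¹`.

Every generator of `yG(n)` acts near the fixed point `ℓ^∞` as a prefix replacement
`ℓ^m η ↦ ℓ^m' η`, and such maps form a subgroup. But `y` doubles a prefix `ℓ^m`, so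
`y_ℓ⁻¹ * x_{n-1} * y_ℓ` sends `ℓ^(m+1) 0 ℓ ζ` to `ℓ^(m+2) 0 0 y⁻²(ζ)`, which is not of this form.
-/

namespace LM

/-- Group structure on the self-homeomorphisms of a space, with the convention
`(f * g) ξ = f (g ξ)`.  A product `f₁ f₂ ⋯ f_k` in the paper's convention
(`fg = g ∘ f`) corresponds to `f_k * ⋯ * f₂ * f₁` here. -/
instance homeoGroup {X : Type*} [TopologicalSpace X] : Group (X ≃ₜ X) where
  mul f g := g.trans f
  one := Homeomorph.refl X
  inv := Homeomorph.symm
  mul_assoc _ _ _ := Homeomorph.ext fun _ => rfl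
  one_mul _ := Homeomorph.ext fun _ => rfl
  mul_one _ := Homeomorph.ext fun _ => rfl
  inv_mul_cancel f := Homeomorph.ext fun x => f.symm_apply_apply x

/-- The `n`-adic Cantor set `{0, …, n-1}^ℕ` with the product topology
(`Fin n` being discrete). -/
abbrev C (n : ℕ) : Type := ℕ → Fin n

/-- The group of self-homeomorphisms of the `n`-adic Cantor set. -/
abbrev Γ (n : ℕ) : Type := C n ≃ₜ C n

/-- Prepend a letter to an infinite sequence. -/
def cons {n : ℕ} (a : Fin n) (s : C n) : C n
  | 0 => a
  | i + 1 => s i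

/-- Prepend a finite word to an infinite sequence. -/
def wcons {n : ℕ} (w : List (Fin n)) (s : C n) : C n := w.foldr cons s

/-- The sum of the letters of a finite word. -/
def dsum {n : ℕ} (w : List (Fin n)) : ℕ := (w.map Fin.val).sum

/-- `f` acts as `core` after the prefix `α` and fixes every sequence not beginning
with `α`. -/
def IsPrefixMap {n : ℕ} (α : List (Fin n)) (core : Γ n) (f : Γ n) : Prop :=
  (∀ η, f (wcons α η) = wcons α (core η)) ∧
  (∀ ξ : C n, (∀ η, ξ ≠ wcons α η) → f ξ = ξ)

/-- The defining equations of the generator `x₀` of the Brown–Thompson group `F(n)`. -/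
def IsX0 (n : ℕ) (hn : 2 ≤ n) (f : Γ n) : Prop :=
  (∀ k : Fin n, (k : ℕ) ≤ n - 2 → ∀ η,
    f (cons ⟨0, by omega⟩ (cons k η)) = cons k η) ∧
  (∀ η, f (cons ⟨0, by omega⟩ (cons ⟨n - 1, by omega⟩ η)) =
    cons ⟨n - 1, by omega⟩ (cons ⟨0, by omega⟩ η)) ∧
  (∀ k : Fin n, 1 ≤ (k : ℕ) → (k : ℕ) ≤ n - 2 → ∀ η,
    f (cons k η) = cons ⟨n - 1, by omega⟩ (cons k η)) ∧
  (∀ η, f (cons ⟨n - 1, by omega⟩ η) =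
    cons ⟨n - 1, by omega⟩ (cons ⟨n - 1, by omega⟩ η))

/-- The defining equations of the generator `x_j`, `1 ≤ j ≤ n - 2`. -/
def IsXMid (n : ℕ) (hn : 2 ≤ n) (j : Fin n) (f : Γ n) : Prop :=
  (∀ k : Fin n, (k : ℕ) < (j : ℕ) → ∀ η, f (cons k η) = cons k η) ∧
  (∀ k m : Fin n, (m : ℕ) = (j : ℕ) + (k : ℕ) → (j : ℕ) + (k : ℕ) ≤ n - 2 → ∀ η,
    f (cons j (cons k η)) = cons m η) ∧
  (∀ k m : Fin n, n - 1 ≤ (j : ℕ) + (k : ℕ) → (m : ℕ) = (j : ℕ) + (k : ℕ) - (n - 1) → ∀ η,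
    f (cons j (cons k η)) = cons ⟨n - 1, by omega⟩ (cons m η)) ∧
  (∀ k : Fin n, (j : ℕ) < (k : ℕ) → (k : ℕ) ≤ n - 2 → ∀ η,
    f (cons k η) = cons ⟨n - 1, by omega⟩ (cons k η)) ∧
  (∀ η, f (cons ⟨n - 1, by omega⟩ η) =
    cons ⟨n - 1, by omega⟩ (cons ⟨n - 1, by omega⟩ η))

/-- The defining equations of the generator `x_{n-1}` (in terms of `x₀`). -/
def IsXLast (n : ℕ) (hn : 2 ≤ n) (x0 f : Γ n) : Prop :=
  (∀ k : Fin n, (k : ℕ) ≤ n - 2 → ∀ η, f (cons k η) = cons k η) ∧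
  (∀ η, f (cons ⟨n - 1, by omega⟩ η) = cons ⟨n - 1, by omega⟩ (x0 η))

/-- `x` is the family `x₀, …, x_{n-1}` of generators of the Brown–Thompson group. -/
def IsXFamily (n : ℕ) (hn : 2 ≤ n) (x : Fin n → Γ n) : Prop :=
  IsX0 n hn (x ⟨0, by omega⟩) ∧
  (∀ j : Fin n, 1 ≤ (j : ℕ) → (j : ℕ) ≤ n - 2 → IsXMid n hn j (x j)) ∧
  IsXLast n hn (x ⟨0, by omega⟩) (x ⟨n - 1, by omega⟩)

/-- The defining (co)recursive equations of the map `y`. -/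
def IsY (n : ℕ) (hn : 2 ≤ n) (f : Γ n) : Prop :=
  (∀ ζ, f (cons ⟨0, by omega⟩ (cons ⟨0, by omega⟩ ζ)) = cons ⟨0, by omega⟩ (f ζ)) ∧
  (∀ k : Fin n, 1 ≤ (k : ℕ) → (k : ℕ) ≤ n - 2 → ∀ ζ,
    f (cons ⟨0, by omega⟩ (cons k ζ)) = cons k ζ) ∧
  (∀ k : Fin n, 1 ≤ (k : ℕ) → (k : ℕ) ≤ n - 2 → ∀ ζ,
    f (cons k ζ) = cons ⟨n - 1, by omega⟩ (cons k ζ)) ∧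
  (∀ ζ, f (cons ⟨0, by omega⟩ (cons ⟨n - 1, by omega⟩ ζ)) =
    cons ⟨n - 1, by omega⟩ (cons ⟨0, by omega⟩ (f⁻¹ ζ))) ∧
  (∀ ζ, f (cons ⟨n - 1, by omega⟩ ζ) =
    cons ⟨n - 1, by omega⟩ (cons ⟨n - 1, by omega⟩ (f ζ)))

section PrefixMaps

variable {n : ℕ}

lemma mul_apply (f g : Γ n) (ξ : C n) : (f * g) ξ = f (g ξ) := rfl

lemma inv_apply_apply (f : Γ n) (ξ : C n) : f⁻¹ (f ξ) = ξ := f.symm_apply_apply ξ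

lemma apply_inv_apply (f : Γ n) (ξ : C n) : f (f⁻¹ ξ) = ξ := f.apply_symm_apply ξ

lemma inv_apply_eq_iff {f : Γ n} {ξ ν : C n} : f⁻¹ ξ = ν ↔ ξ = f ν := f.symm_apply_eq

lemma cons_head_tail (ξ : C n) : cons (ξ 0) (fun i => ξ (i + 1)) = ξ := by
  funext i; cases i <;> rfl

lemma continuous_cons (a : Fin n) : Continuous (cons a) :=
  continuous_pi fun i => by cases i <;> first | exact continuous_const | exact continuous_apply _

def letterFun (a : Fin n) (c : C n → C n) (ξ : C n) : C n :=
  if ξ 0 = a then cons a (c fun i => ξ (i + 1)) else ξ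

lemma letterFun_cons (a : Fin n) (c : C n → C n) (η : C n) :
    letterFun a c (cons a η) = cons a (c η) :=
  if_pos rfl

lemma letterFun_of_ne {a : Fin n} (c : C n → C n) {ξ : C n} (h : ξ 0 ≠ a) :
    letterFun a c ξ = ξ :=
  if_neg h

lemma letterFun_comp (a : Fin n) (c d : C n → C n) (ξ : C n) :
    letterFun a c (letterFun a d ξ) = letterFun a (c ∘ d) ξ := by
  by_cases h : ξ 0 = a
  · rw [← cons_head_tail ξ, h, letterFun_cons, letterFun_cons, letterFun_cons]; rfl
  · rw [letterFun_of_ne _ h, letterFun_of_ne _ h, letterFun_of_ne _ h]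

lemma letterFun_id (a : Fin n) (ξ : C n) : letterFun a id ξ = ξ := by
  by_cases h : ξ 0 = a
  · rw [← cons_head_tail ξ, h, letterFun_cons]; rfl
  · rw [letterFun_of_ne _ h]

lemma continuous_letterFun (a : Fin n) {c : C n → C n} (hc : Continuous c) :
    Continuous (letterFun a c) := by
  have hclopen : IsClopen {ξ : C n | ξ 0 = a} :=
    (isClopen_discrete {a}).preimage (continuous_apply 0)
  refine Continuous.if (fun ξ hξ => ?_) ((continuous_cons a).comp
    (hc.comp (continuous_pi fun i => continuous_apply (i + 1)))) continuous_id
  simp [hclopen.frontier_eq] at hξ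

def letterHom (a : Fin n) : Γ n →* Γ n where
  toFun c :=
    { toFun := letterFun a c
      invFun := letterFun a c.symm
      left_inv ξ := by
        rw [letterFun_comp, show ⇑c.symm ∘ ⇑c = id from funext c.symm_apply_apply, letterFun_id]
      right_inv ξ := by
        rw [letterFun_comp, show ⇑c ∘ ⇑c.symm = id from funext c.apply_symm_apply, letterFun_id]
      continuous_toFun := continuous_letterFun a c.continuous
      continuous_invFun := continuous_letterFun a c.symm.continuous }
  map_one' := Homeomorph.ext (letterFun_id a)
  map_mul' c d := Homeomorph.ext fun ξ => (letterFun_comp a c d ξ).symm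

/-- `prefixHom α y` is the paper's `y_α`. -/
def prefixHom : List (Fin n) → Γ n →* Γ n
  | [] => MonoidHom.id (Γ n)
  | a :: w => (letterHom a).comp (prefixHom w)

@[simp] lemma prefixHom_nil (c : Γ n) : prefixHom [] c = c := rfl

@[simp] lemma prefixHom_cons_apply_cons (a : Fin n) (w : List (Fin n)) (c : Γ n) (η : C n) :
    prefixHom (a :: w) c (cons a η) = cons a (prefixHom w c η) :=
  letterFun_cons a _ η

lemma prefixHom_cons_apply_of_ne {a b : Fin n} (w : List (Fin n)) (c : Γ n) (η : C n)
    (h : b ≠ a) : prefixHom (a :: w) c (cons b η) = cons b η :=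
  letterFun_of_ne _ h

lemma prefixHom_cons (a : Fin n) (w : List (Fin n)) (c : Γ n) :
    prefixHom (a :: w) c = prefixHom [a] (prefixHom w c) :=
  rfl

lemma prefixHom_wcons (w : List (Fin n)) (c : Γ n) (η : C n) :
    prefixHom w c (wcons w η) = wcons w (c η) := by
  induction w with
  | nil => rfl
  | cons a w ih => exact (prefixHom_cons_apply_cons a w c _).trans (congrArg (cons a) ih)

lemma prefixHom_of_forall_ne (w : List (Fin n)) (c : Γ n) {ξ : C n}
    (h : ∀ η, ξ ≠ wcons w η) : prefixHom w c ξ = ξ := by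
  induction w generalizing ξ with
  | nil => exact absurd rfl (h ξ)
  | cons a w ih =>
    by_cases ha : ξ 0 = a
    · rw [← cons_head_tail ξ, ha, prefixHom_cons_apply_cons, ih]
      intro η hη
      exact h η (by rw [← cons_head_tail ξ, ha, hη]; rfl)
    · exact letterFun_of_ne _ ha

lemma isPrefixMap_prefixHom (w : List (Fin n)) (c : Γ n) :
    IsPrefixMap w c (prefixHom w c) :=
  ⟨prefixHom_wcons w c, fun _ => prefixHom_of_forall_ne w c⟩

lemma IsPrefixMap.eq_prefixHom {w : List (Fin n)} {c f : Γ n} (h : IsPrefixMap w c f) :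
    f = prefixHom w c := by
  ext ξ : 1
  by_cases hξ : ∃ η, ξ = wcons w η
  · obtain ⟨η, rfl⟩ := hξ
    rw [h.1, prefixHom_wcons]
  · simp only [not_exists] at hξ
    rw [h.2 ξ hξ, prefixHom_of_forall_ne w c hξ]

lemma prefixHom_conj {α β : List (Fin n)} (c : Γ n) {g : Γ n}
    (hg : ∀ η, g (wcons β η) = wcons α η) : g * prefixHom β c * g⁻¹ = prefixHom α c := by
  refine IsPrefixMap.eq_prefixHom ⟨fun η => ?_, fun ξ hξ => ?_⟩
  · rw [mul_apply, mul_apply, ← hg, inv_apply_apply, prefixHom_wcons, hg]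
  · rw [mul_apply, mul_apply, prefixHom_of_forall_ne, apply_inv_apply]
    intro η hη
    exact hξ η (by rw [← hg, ← hη, apply_inv_apply])

end PrefixMaps

section LocalShift

variable {n : ℕ}

lemma wcons_replicate_add (b : Fin n) (k l : ℕ) (η : C n) :
    wcons (List.replicate (k + l) b) η =
      wcons (List.replicate k b) (wcons (List.replicate l b) η) := by
  rw [List.replicate_add]
  exact List.foldr_append ..

lemma wcons_replicate_succ (b : Fin n) (k : ℕ) (η : C n) :
    wcons (List.replicate (k + 1) b) η = cons b (wcons (List.replicate k b) η) :=
  rfl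

lemma wcons_replicate_succ' (b : Fin n) (k : ℕ) (η : C n) :
    wcons (List.replicate (k + 1) b) η = wcons (List.replicate k b) (cons b η) :=
  wcons_replicate_add b k 1 η

lemma eq_of_wcons_replicate_eq {b : Fin n} {k k' : ℕ} {ξ ξ' : C n}
    (h : wcons (List.replicate k b) ξ = wcons (List.replicate k' b) ξ')
    (hξ : ξ 0 ≠ b) (hξ' : ξ' 0 ≠ b) : ξ = ξ' := by
  induction k generalizing k' with
  | zero =>
    cases k' with
    | zero => exact h
    | succ k' => exact absurd (congrFun h 0) hξ
  | succ k ih =>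
    cases k' with
    | zero => exact absurd (congrFun h 0).symm hξ'
    | succ k' => exact ih (funext fun i => congrFun h (i + 1))

lemma eq_of_wcons_eq {u v : List (Fin n)} {s t : C n} (h : wcons u s = wcons v t)
    (hl : u.length = v.length) : u = v := by
  induction u generalizing v with
  | nil => exact (List.length_eq_zero_iff.mp hl.symm).symm
  | cons a u ih =>
    obtain _ | ⟨a', v⟩ := v
    · exact absurd hl (by simp)
    · exact List.cons_eq_cons.mpr
        ⟨congrFun h 0, ih (funext fun i => congrFun h (i + 1)) (by simpa using hl)⟩

def localShift (b : Fin n) : Subgroup (Γ n) where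
  carrier := {f | ∃ m m', ∀ η, f (wcons (List.replicate m b) η) = wcons (List.replicate m' b) η}
  one_mem' := ⟨0, 0, fun _ => rfl⟩
  mul_mem' := by
    rintro f g ⟨mf, mf', hf⟩ ⟨mg, mg', hg⟩
    refine ⟨mg + mf, mf' + mg', fun η => ?_⟩
    rw [mul_apply, wcons_replicate_add, hg, ← wcons_replicate_add, add_comm mg',
      wcons_replicate_add, hf, ← wcons_replicate_add]
  inv_mem' := by
    rintro f ⟨m, m', hf⟩
    exact ⟨m', m, fun η => by rw [← hf, inv_apply_apply]⟩

lemma IsPrefixMap.mem_localShift {b : Fin n} {w : List (Fin n)} {c f : Γ n}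
    (hf : IsPrefixMap w c f) (hw : w ≠ List.replicate w.length b) : f ∈ localShift b :=
  ⟨w.length, w.length, fun η => hf.2 _ fun μ hμ => hw (eq_of_wcons_eq hμ (by simp)).symm⟩

end LocalShift

section Generators

variable {n : ℕ}

local notation "𝟎" => (Fin.mk 0 (by omega) : Fin n)
local notation "ℓ" => (Fin.mk (n - 1) (by omega) : Fin n)

lemma last_ne_zero (hn : 2 ≤ n) : ℓ ≠ 𝟎 := fun h => by
  have := congrArg Fin.val h
  simp only at this
  omega

lemma letter_cases (hn : 2 ≤ n) (k : Fin n) :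
    k = 𝟎 ∨ k = ℓ ∨ (k ≠ 𝟎 ∧ k ≠ ℓ ∧ 1 ≤ (k : ℕ) ∧ (k : ℕ) ≤ n - 2) := by
  rcases k with ⟨k, hk⟩
  simp only [ne_eq, Fin.mk.injEq]
  omega

variable {hn : 2 ≤ n} {x : Fin n → Γ n} {y : Γ n}

lemma IsXFamily.zero_apply_last (hx : IsXFamily n hn x) (η : C n) :
    x 𝟎 (cons ℓ η) = cons ℓ (cons ℓ η) :=
  hx.1.2.2.2 η

lemma IsXFamily.last_eq (hx : IsXFamily n hn x) : x ℓ = prefixHom [ℓ] (x 𝟎) := by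
  refine IsPrefixMap.eq_prefixHom ⟨hx.2.2.2, fun ξ hξ => ?_⟩
  rw [← cons_head_tail ξ]
  refine hx.2.2.1 _ ?_ _
  rcases letter_cases hn (ξ 0) with h | h | h
  · simp [h]
  · exact absurd (by rw [← cons_head_tail ξ, h]; rfl) (hξ _)
  · exact h.2.2.2

lemma IsXFamily.apply_last_last (hx : IsXFamily n hn x) (k : Fin n) (η : C n) :
    x k (cons ℓ (cons ℓ η)) = cons ℓ (cons ℓ (cons ℓ η)) := by
  rcases letter_cases hn k with rfl | rfl | ⟨-, -, h1, h2⟩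
  · exact hx.zero_apply_last _
  · rw [hx.last_eq, prefixHom_cons_apply_cons, prefixHom_nil, hx.zero_apply_last]
  · exact (hx.2.1 k h1 h2).2.2.2.2 _

lemma IsY.mul_inv_prefixHom_last (hx : IsXFamily n hn x) (hy : IsY n hn y) :
    y * (prefixHom [ℓ] y)⁻¹ = (prefixHom [ℓ, 𝟎] y)⁻¹ * prefixHom [𝟎] y * x 𝟎 := by
  rw [mul_inv_eq_iff_eq_mul, ← map_inv]
  obtain ⟨hx00, hx0ℓ, hxk, hxℓ⟩ := hx.1
  obtain ⟨hy00, hy0k, hyk, hy0ℓ, hyℓ⟩ := hy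
  have hℓ0 := last_ne_zero hn
  ext ξ : 1
  rw [← cons_head_tail ξ]
  generalize ξ 0 = k, (fun i => ξ (i + 1)) = t
  rcases letter_cases hn k with rfl | rfl | ⟨hk0, hkℓ, hk1, hk2⟩
  · rw [← cons_head_tail t]
    generalize t 0 = j, (fun i => t (i + 1)) = u
    rcases letter_cases hn j with rfl | rfl | ⟨hj0, hjℓ, hj1, hj2⟩
    · simp [-map_inv, prefixHom_cons_apply_of_ne, hℓ0.symm, hy00, hx00 𝟎 (Nat.zero_le _)]
    · simp [-map_inv, prefixHom_cons_apply_of_ne, hℓ0, hℓ0.symm, hy0ℓ, hx0ℓ]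
    · simp [-map_inv, prefixHom_cons_apply_of_ne, hℓ0.symm, hj0, hjℓ, hy0k _ hj1 hj2, hx00 _ hj2]
  · simp [-map_inv, prefixHom_cons_apply_of_ne, hℓ0, hyℓ, hxℓ]
  · simp [-map_inv, prefixHom_cons_apply_of_ne, hℓ0, hk0, hkℓ, hyk _ hk1 hk2, hxk _ hk1 hk2]

lemma IsY.conj_last_mem (hx : IsXFamily n hn x) (hy : IsY n hn y) {H : Subgroup (Γ n)}
    (hx0 : x 𝟎 ∈ H) (hxℓ : x ℓ ∈ H) (hyℓ0 : prefixHom [ℓ, 𝟎] y ∈ H) :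
    prefixHom [ℓ] y * x ℓ * (prefixHom [ℓ] y)⁻¹ ∈ H := by
  have push (w : List (Fin n)) (c : Γ n) :
      x 𝟎 * prefixHom (ℓ :: w) c * (x 𝟎)⁻¹ = prefixHom (ℓ :: ℓ :: w) c :=
    prefixHom_conj c fun η => hx.zero_apply_last _
  have shift : x ℓ * prefixHom [ℓ, ℓ] y * (x ℓ)⁻¹ = prefixHom [ℓ, ℓ, ℓ] y :=
    prefixHom_conj y (hx.apply_last_last ℓ)
  have hE₁ : prefixHom [ℓ] y * (prefixHom [ℓ, ℓ] y)⁻¹ ∈ H := by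
    rw [prefixHom_cons ℓ [ℓ], ← map_inv, ← map_mul, hy.mul_inv_prefixHom_last hx, map_mul,
      map_mul, map_inv, ← prefixHom_cons, ← hx.last_eq, ← push [𝟎]]
    exact mul_mem (mul_mem (inv_mem (mul_mem (mul_mem hx0 hyℓ0) (inv_mem hx0))) hyℓ0) hxℓ
  have hE₂ : prefixHom [ℓ, ℓ] y * (prefixHom [ℓ, ℓ, ℓ] y)⁻¹ ∈ H := by
    rw [← push [], ← push [ℓ]]
    simpa only [mul_assoc, inv_mul_cancel_left, mul_inv_rev, inv_inv] using
      mul_mem (mul_mem hx0 hE₁) (inv_mem hx0)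
  have key : prefixHom [ℓ] y * x ℓ * (prefixHom [ℓ] y)⁻¹ =
      prefixHom [ℓ] y * (prefixHom [ℓ, ℓ] y)⁻¹ * (prefixHom [ℓ, ℓ] y * (prefixHom [ℓ, ℓ, ℓ] y)⁻¹) *
        x ℓ * (prefixHom [ℓ] y * (prefixHom [ℓ, ℓ] y)⁻¹)⁻¹ := by
    rw [← shift]
    group
  rw [key]
  exact mul_mem (mul_mem (mul_mem hE₁ hE₂) hxℓ) (inv_mem hE₁)

lemma IsXFamily.mem_localShift (hx : IsXFamily n hn x) (k : Fin n) : x k ∈ localShift ℓ :=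
  ⟨2, 3, hx.apply_last_last k⟩

lemma IsY.apply_replicate_last (hy : IsY n hn y) (m : ℕ) (η : C n) :
    y (wcons (List.replicate m ℓ) η) = wcons (List.replicate (2 * m) ℓ) (y η) := by
  induction m with
  | zero => rfl
  | succ m ih => rw [wcons_replicate_succ, hy.2.2.2.2, ih]; rfl

lemma IsY.inv_apply_replicate_last (hy : IsY n hn y) (m : ℕ) (η : C n) :
    y⁻¹ (wcons (List.replicate (2 * m) ℓ) η) = wcons (List.replicate m ℓ) (y⁻¹ η) := by
  rw [inv_apply_eq_iff, hy.apply_replicate_last, apply_inv_apply]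

lemma IsY.conj_zero_apply (hx : IsXFamily n hn x) (hy : IsY n hn y) (m : ℕ) (ζ : C n) :
    (y⁻¹ * x 𝟎 * y) (wcons (List.replicate m ℓ) (cons 𝟎 (cons ℓ ζ))) =
      wcons (List.replicate (m + 1) ℓ) (cons 𝟎 (cons 𝟎 (y⁻¹ (y⁻¹ ζ)))) := by
  have hy00 : y⁻¹ (cons 𝟎 (y⁻¹ ζ)) = cons 𝟎 (cons 𝟎 (y⁻¹ (y⁻¹ ζ))) := by
    rw [inv_apply_eq_iff, hy.1, apply_inv_apply]
  rw [mul_apply, mul_apply, hy.apply_replicate_last, hy.2.2.2.1, ← wcons_replicate_succ',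
    wcons_replicate_succ, hx.zero_apply_last, ← wcons_replicate_succ, ← wcons_replicate_succ,
    show 2 * m + 1 + 1 = 2 * (m + 1) by ring, hy.inv_apply_replicate_last, hy00]

lemma IsY.conj_zero_not_mem_localShift (hx : IsXFamily n hn x) (hy : IsY n hn y) :
    prefixHom [ℓ] (y⁻¹ * x 𝟎 * y) ∉ localShift ℓ := by
  rintro ⟨m, m', h⟩
  have h' := h (cons ℓ (cons 𝟎 (cons ℓ fun _ => ℓ)))
  rw [← wcons_replicate_succ', ← wcons_replicate_succ', wcons_replicate_succ,
    prefixHom_cons_apply_cons, prefixHom_nil, hy.conj_zero_apply hx, ← wcons_replicate_succ] at h'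
  have hℓ0 := last_ne_zero hn
  exact hℓ0 (congrFun (eq_of_wcons_replicate_eq h' hℓ0.symm hℓ0.symm) 1).symm

end Generators

theorem conjugate_mem_and_not_mem'
    (n : ℕ) (hn : 2 ≤ n) (x : Fin n → Γ n) (hx : IsXFamily n hn x)
    (ycore : Γ n) (hy : IsY n hn ycore)
    (y10 : Γ n) (hy10 : IsPrefixMap [⟨n - 1, by omega⟩, ⟨0, by omega⟩] ycore y10)
    (y0 : Γ n) (hy0 : IsPrefixMap [⟨0, by omega⟩] ycore y0)
    (y1 : Γ n) (hy1 : IsPrefixMap [⟨n - 1, by omega⟩] ycore y1)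
    (G0 : Subgroup (Γ n)) (hG0 : G0 = Subgroup.closure (Set.range x ∪ {y10}))
    (yG : Subgroup (Γ n)) (hyG : yG = Subgroup.closure (Set.range x ∪ {y10, y0})) :
    y1 * x ⟨n - 1, by omega⟩ * y1⁻¹ ∈ G0 ∧ y1⁻¹ * x ⟨n - 1, by omega⟩ * y1 ∉ yG := by
  subst hG0 hyG
  have hℓ0 := last_ne_zero hn
  obtain rfl := hy1.eq_prefixHom
  refine ⟨hy.conj_last_mem hx (Subgroup.subset_closure (.inl ⟨_, rfl⟩))
    (Subgroup.subset_closure (.inl ⟨_, rfl⟩))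
    (hy10.eq_prefixHom ▸ Subgroup.subset_closure (.inr rfl)), fun hmem => ?_⟩
  have hle : Subgroup.closure (Set.range x ∪ {y10, y0}) ≤ localShift ⟨n - 1, by omega⟩ := by
    refine (Subgroup.closure_le _).mpr ?_
    rintro f (⟨k, rfl⟩ | rfl | rfl)
    · exact hx.mem_localShift k
    · exact hy10.mem_localShift (by simp [hℓ0.symm])
    · exact hy0.mem_localShift (by simp [hℓ0.symm])
  apply hy.conj_zero_not_mem_localShift hx
  rw [map_mul, map_mul, map_inv, ← hx.last_eq]
  exact hle hmem

end LM
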